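/- arXiv:1206.5840 — 2 statements merged into one kernel-verified Lean document; each statement's English description precedes it below -/
import Mathlib

section
/- Let B be a standard fractional Brownian motion with Hurst parameter H ∈ (0,1], i.e., a centered Gaussian process with Cov(B_s, B_t) = (|s|^{2H} + |t|^{2H} − |t−s|^{2H})/2. Fix t ∈ ℝ and define Z_s = √2·B_s − |s|^{2H}. Then for any integer k, real numbers s_1 < ⋯ < s_k and β_1, …, β_k ∈ ℝ, one has E[e^{Z_t} · exp(∑_i β_i Z_{s_i})] = E[exp(∑_i β_i (|t|^{2H} + Z^{(t)}_{s_i}))], where Z^{(t)}_s = √2·B_s − |s−t|^{2H}. -/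
open MeasureTheory ProbabilityTheory Real Filter
noncomputable section

/-- `B` is a (two-sided) fractional Brownian motion with Hurst parameter `H`:
a centered Gaussian process with covariance
`Cov(B_s, B_t) = (|s|^{2H} + |t|^{2H} - |t-s|^{2H})/2`, encoded via its
finite-dimensional distributions: every finite linear combination is Gaussian
with mean `0` and the variance induced by this covariance. -/
def IsFBM {Ω : Type*} [MeasureSpace Ω] (H : ℝ) (B : ℝ → Ω → ℝ) : Prop :=
  ∀ (n : ℕ) (s c : Fin n → ℝ),
    Measure.map (fun ω => ∑ i, c i * B (s i) ω) (ℙ : Measure Ω) =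
      gaussianReal 0
        (Real.toNNReal (∑ i, ∑ j, c i * c j *
          ((|s i| ^ (2*H) + |s j| ^ (2*H) - |s i - s j| ^ (2*H)) / 2)))

/-
The factor `exp (Z t)` tilts the law of the Gaussian process `√2 B` by a shift equal to its
covariance with `√2 B t`, namely `|t|^{2H} + |s|^{2H} - |s - t|^{2H}` (Cameron–Martin). Concretely,
both sides are exponential moments of centered Gaussian linear combinations of `B`, equal to
`exp (Var / 2)`, and the identity reduces to expanding the covariance quadratic form of the points
`t, s₁, …, s_k` around `t`.
-/

def covQuadForm {ι : Type*} (K : ι → ι → ℝ) {n : ℕ} (s : Fin n → ι) (c : Fin n → ℝ) : ℝ :=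
  ∑ i, ∑ j, c i * c j * K (s i) (s j)

lemma covQuadForm_cons {ι : Type*} {K : ι → ι → ℝ} (hK : ∀ a b, K a b = K b a) {n : ℕ}
    (a : ι) (s : Fin n → ι) (c₀ : ℝ) (c : Fin n → ℝ) :
    covQuadForm K (Fin.cons a s : Fin (n + 1) → ι) (Fin.cons c₀ c) =
      c₀ ^ 2 * K a a + 2 * c₀ * ∑ i, c i * K a (s i) + covQuadForm K s c := by
  simp only [covQuadForm, Fin.sum_univ_succ, Fin.cons_zero, Fin.cons_succ, Finset.sum_add_distrib,
    Finset.mul_sum]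
  simp_rw [hK _ a]
  rw [← add_assoc, add_assoc (c₀ * c₀ * K a a), ← Finset.sum_add_distrib]
  ring_nf

def IsCenteredGaussianWithCov {Ω ι : Type*} [MeasurableSpace Ω] (X : ι → Ω → ℝ)
    (K : ι → ι → ℝ) (P : Measure Ω) : Prop :=
  ∀ (n : ℕ) (s : Fin n → ι) (c : Fin n → ℝ),
    P.map (fun ω ↦ ∑ i, c i * X (s i) ω) = gaussianReal 0 (covQuadForm K s c).toNNReal

namespace IsCenteredGaussianWithCov

variable {Ω ι : Type*} [MeasurableSpace Ω] {P : Measure Ω} {X : ι → Ω → ℝ} {K : ι → ι → ℝ}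
  (hX : IsCenteredGaussianWithCov X K P)
include hX

lemma aemeasurable_sum {n : ℕ} (s : Fin n → ι) (c : Fin n → ℝ) :
    AEMeasurable (fun ω ↦ ∑ i, c i * X (s i) ω) P :=
  aemeasurable_of_map_neZero (by rw [hX n s c]; infer_instance)

lemma memLp_sum {n : ℕ} (s : Fin n → ι) (c : Fin n → ℝ) :
    MemLp (fun ω ↦ ∑ i, c i * X (s i) ω) 2 P := by
  have h : MemLp id 2 (P.map fun ω ↦ ∑ i, c i * X (s i) ω) := by
    rw [hX n s c]; exact memLp_id_gaussianReal 2
  exact h.comp_of_map (hX.aemeasurable_sum s c)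

lemma variance_sum {n : ℕ} (s : Fin n → ι) (c : Fin n → ℝ) :
    Var[fun ω ↦ ∑ i, c i * X (s i) ω; P] = (covQuadForm K s c).toNNReal := by
  rw [← variance_id_map (hX.aemeasurable_sum s c), hX n s c, variance_id_gaussianReal]

lemma mgf_sum {n : ℕ} (s : Fin n → ι) (c : Fin n → ℝ) (r : ℝ) :
    mgf (fun ω ↦ ∑ i, c i * X (s i) ω) P r = rexp ((covQuadForm K s c).toNNReal * r ^ 2 / 2) := by
  rw [mgf_gaussianReal (hX n s c), zero_mul, zero_add]

lemma memLp (a : ι) : MemLp (X a) 2 P := by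
  simpa using hX.memLp_sum ![a] ![1]

lemma variance_eval (a : ι) : Var[X a; P] = (K a a).toNNReal := by
  simpa [covQuadForm] using hX.variance_sum ![a] ![1]

lemma variance_sub_eval (hK : ∀ a b, K a b = K b a) (a b : ι) :
    Var[X a - X b; P] = (K a a + K b b - 2 * K a b).toNNReal := by
  have h := hX.variance_sum ![a, b] ![1, -1]
  simp only [covQuadForm, Fin.sum_univ_two] at h
  convert h using 4
  · simp [sub_eq_add_neg]
  · simp [hK b a]; ring

section Kernel

variable (hK : ∀ a b, K a b = K b a) (hK₀ : ∀ a, 0 ≤ K a a)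
  (hK₁ : ∀ a b, 0 ≤ K a a + K b b - 2 * K a b)
include hK hK₀ hK₁

lemma covariance_eval [IsFiniteMeasure P] (a b : ι) : cov[X a, X b; P] = K a b := by
  have h := variance_sub (hX.memLp a) (hX.memLp b)
  rw [hX.variance_sub_eval hK, hX.variance_eval, hX.variance_eval, Real.coe_toNNReal _ (hK₁ a b),
    Real.coe_toNNReal _ (hK₀ a), Real.coe_toNNReal _ (hK₀ b)] at h
  linarith

/- The laws only record `(covQuadForm K s c).toNNReal`; nonnegativity of the form is recovered from
the covariances `cov[X a, X b] = K a b`, which the laws of `X a` and `X a - X b` determine. -/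
lemma covQuadForm_nonneg [IsFiniteMeasure P] {n : ℕ} (s : Fin n → ι) (c : Fin n → ℝ) :
    0 ≤ covQuadForm K s c := by
  have h := variance_fun_sum (μ := P) (X := fun i ω ↦ c i * X (s i) ω)
    fun i ↦ (hX.memLp (s i)).const_mul (c i)
  simp only [covariance_const_mul_left, covariance_const_mul_right,
    hX.covariance_eval hK hK₀ hK₁] at h
  calc 0 ≤ Var[fun ω ↦ ∑ i, c i * X (s i) ω; P] := variance_nonneg _ _
    _ = covQuadForm K s c := by
      rw [h, covQuadForm]
      exact Finset.sum_congr rfl fun i _ ↦ Finset.sum_congr rfl fun j _ ↦ by ring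

lemma integral_exp_mul_sum [IsFiniteMeasure P] {n : ℕ} (s : Fin n → ι) (c : Fin n → ℝ) (r : ℝ) :
    ∫ ω, rexp (r * ∑ i, c i * X (s i) ω) ∂P = rexp (covQuadForm K s c * r ^ 2 / 2) := by
  rw [← mgf, hX.mgf_sum, Real.coe_toNNReal _ (hX.covQuadForm_nonneg hK hK₀ hK₁ s c)]

lemma integral_exp_eval_mul_exp_sum [IsFiniteMeasure P] {n : ℕ} (a : ι) (s : Fin n → ι)
    (c : Fin n → ℝ) (r : ℝ) :
    ∫ ω, rexp (r * X a ω) * rexp (r * ∑ i, c i * X (s i) ω) ∂P =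
      rexp (r ^ 2 * (K a a / 2 + ∑ i, c i * K a (s i))) *
        ∫ ω, rexp (r * ∑ i, c i * X (s i) ω) ∂P := by
  have hcons : ∀ ω, rexp (r * X a ω) * rexp (r * ∑ i, c i * X (s i) ω) =
      rexp (r * ∑ i, (Fin.cons 1 c : Fin (n + 1) → ℝ) i *
        X ((Fin.cons a s : Fin (n + 1) → ι) i) ω) := by
    intro ω
    rw [← Real.exp_add, Fin.sum_univ_succ]
    simp only [Fin.cons_zero, Fin.cons_succ, one_mul, mul_add]
  simp_rw [hcons]
  rw [hX.integral_exp_mul_sum hK hK₀ hK₁, hX.integral_exp_mul_sum hK hK₀ hK₁,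
    covQuadForm_cons hK, ← Real.exp_add]
  ring_nf

end Kernel

end IsCenteredGaussianWithCov

def fbmCov (H a b : ℝ) : ℝ :=
  (|a| ^ (2 * H) + |b| ^ (2 * H) - |a - b| ^ (2 * H)) / 2

section FBM

variable {H : ℝ}

lemma fbmCov_comm (a b : ℝ) : fbmCov H a b = fbmCov H b a := by
  rw [fbmCov, fbmCov, abs_sub_comm]
  ring

lemma fbmCov_self (hH : 0 < H) (a : ℝ) : fbmCov H a a = |a| ^ (2 * H) := by
  rw [fbmCov, sub_self, abs_zero, Real.zero_rpow (by positivity)]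
  ring

lemma fbmCov_increment (hH : 0 < H) (a b : ℝ) :
    fbmCov H a a + fbmCov H b b - 2 * fbmCov H a b = |a - b| ^ (2 * H) := by
  rw [fbmCov_self hH, fbmCov_self hH, fbmCov]
  ring

lemma IsFBM.isCenteredGaussianWithCov {Ω : Type*} [MeasureSpace Ω] {B : ℝ → Ω → ℝ}
    (hB : IsFBM H B) : IsCenteredGaussianWithCov B (fbmCov H) ℙ :=
  hB

lemma IsFBM.integral_exp_eval_mul_exp_sum {Ω : Type*} [MeasureSpace Ω]
    [IsFiniteMeasure (ℙ : Measure Ω)] {B : ℝ → Ω → ℝ} (hH : 0 < H) (hB : IsFBM H B) {n : ℕ}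
    (a : ℝ) (s : Fin n → ℝ) (c : Fin n → ℝ) (r : ℝ) :
    ∫ ω, rexp (r * B a ω) * rexp (r * ∑ i, c i * B (s i) ω) =
      rexp (r ^ 2 * (|a| ^ (2 * H) / 2 + ∑ i, c i * fbmCov H a (s i))) *
        ∫ ω, rexp (r * ∑ i, c i * B (s i) ω) := by
  rw [hB.isCenteredGaussianWithCov.integral_exp_eval_mul_exp_sum fbmCov_comm
    (fun a ↦ (fbmCov_self hH a).symm ▸ by positivity)
    (fun a b ↦ (fbmCov_increment hH a b).symm ▸ by positivity), fbmCov_self hH]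

end FBM

theorem stmt0_general {Ω : Type*} [MeasureSpace Ω] [IsProbabilityMeasure (ℙ : Measure Ω)]
    (H : ℝ) (hH : H ∈ Set.Ioc (0:ℝ) 1) (B : ℝ → Ω → ℝ) (hB : IsFBM H B)
    (t : ℝ) (Z Zt : ℝ → Ω → ℝ)
    (hZ : ∀ s ω, Z s ω = Real.sqrt 2 * B s ω - |s| ^ (2*H))
    (hZt : ∀ s ω, Zt s ω = Real.sqrt 2 * B s ω - |s - t| ^ (2*H))
    (k : ℕ) (s : Fin k → ℝ) (β : Fin k → ℝ) :
    ∫ ω, Real.exp (Z t ω) * Real.exp (∑ i, β i * Z (s i) ω) ∂ℙ =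
      ∫ ω, Real.exp (∑ i, β i * (|t| ^ (2*H) + Zt (s i) ω)) ∂ℙ := by
  have hL : ∀ ω, rexp (Z t ω) * rexp (∑ i, β i * Z (s i) ω) =
      rexp (-(|t| ^ (2 * H) + ∑ i, β i * |s i| ^ (2 * H))) *
        (rexp (√2 * B t ω) * rexp (√2 * ∑ i, β i * B (s i) ω)) := by
    intro ω
    simp only [← Real.exp_add, hZ, mul_sub, Finset.sum_sub_distrib, Finset.mul_sum]
    ring_nf
  have hR : ∀ ω, rexp (∑ i, β i * (|t| ^ (2 * H) + Zt (s i) ω)) =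
      rexp (∑ i, β i * (|t| ^ (2 * H) - |s i - t| ^ (2 * H))) *
        rexp (√2 * ∑ i, β i * B (s i) ω) := by
    intro ω
    rw [← Real.exp_add, Finset.mul_sum, ← Finset.sum_add_distrib]
    exact congrArg rexp (Finset.sum_congr rfl fun i _ ↦ by rw [hZt]; ring)
  simp_rw [hL, hR]
  rw [integral_const_mul, integral_const_mul, hB.integral_exp_eval_mul_exp_sum hH.1,
    ← mul_assoc, ← Real.exp_add, Real.sq_sqrt zero_le_two]
  congr 2
  have hcov : ∀ i, β i * fbmCov H t (s i) =
      (β i * (|t| ^ (2 * H) - |s i - t| ^ (2 * H)) + β i * |s i| ^ (2 * H)) / 2 := fun i ↦ by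
    rw [fbmCov, abs_sub_comm]; ring
  simp_rw [hcov]
  rw [← Finset.sum_div, Finset.sum_add_distrib]
  ring

theorem stmt0 {Ω : Type*} [MeasureSpace Ω] [IsProbabilityMeasure (ℙ : Measure Ω)]
    (H : ℝ) (hH : H ∈ Set.Ioc (0:ℝ) 1) (B : ℝ → Ω → ℝ) (hB : IsFBM H B)
    (t : ℝ) (Z Zt : ℝ → Ω → ℝ)
    (hZ : ∀ s ω, Z s ω = Real.sqrt 2 * B s ω - |s| ^ (2*H))
    (hZt : ∀ s ω, Zt s ω = Real.sqrt 2 * B s ω - |s - t| ^ (2*H))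
    (k : ℕ) (s : Fin k → ℝ) (hs : StrictMono s) (β : Fin k → ℝ) :
    ∫ ω, Real.exp (Z t ω) * Real.exp (∑ i, β i * Z (s i) ω) ∂ℙ =
      ∫ ω, Real.exp (∑ i, β i * (|t| ^ (2*H) + Zt (s i) ω)) ∂ℙ :=
  stmt0_general H hH B hB t Z Zt hZ hZt k s β
end
end

section
/- For every η > 0, ∫_ℝ dy / (∑_{k∈ℤ} e^{k y η² − k² η²}) = 2. -/
open MeasureTheory Real
noncomputable section

/-! With `S(y) = ∑ₖ exp (k y b - k² b)` and `b = η²`, shifting the summation index gives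
`S (y + 2n) = exp (n y b + n² b) S(y)`, so the `2ℤ`-periodisation `∑ₙ 1 / S (y + 2n)` of `1 / S`
equals `S(-y) / S(y) = 1`. Folding `ℝ` onto the fundamental domain `(0, 2]` of `2ℤ` then gives
`∫ 1 / S = 2`. -/

open Set in
theorem lintegral_eq_setLIntegral_Ioc_tsum_add_int_mul {T : ℝ} (hT : 0 < T) {f : ℝ → ENNReal}
    (hf : Measurable f) :
    ∫⁻ x, f x = ∫⁻ x in Ioc 0 T, ∑' n : ℤ, f (x + n * T) := by
  have hfd := isAddFundamentalDomain_Ioc hT 0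
  rw [zero_add] at hfd
  let g : ℤ → AddSubgroup.zmultiples T := fun n => ⟨n • T, AddSubgroup.zsmul_mem_zmultiples T n⟩
  have hg : Function.Bijective g :=
    ⟨fun m n h => (zsmul_left_strictMono hT).injective (congrArg Subtype.val h),
     fun ⟨_, n, rfl⟩ => ⟨n, rfl⟩⟩
  rw [hfd.lintegral_eq_tsum'', ← hg.1.tsum_eq (by simp [hg.2.range_eq]),
    lintegral_tsum fun n => by fun_prop]
  refine tsum_congr fun n => lintegral_congr fun x => ?_
  change f (n • T + x) = _
  rw [zsmul_eq_mul, add_comm]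

theorem integral_eq_mul_of_hasSum_add_int_mul {T c : ℝ} (hT : 0 < T) {f : ℝ → ℝ}
    (hf : Measurable f) (hf₀ : 0 ≤ f) (hc : ∀ x, HasSum (fun n : ℤ => f (x + n * T)) c) :
    ∫ x, f x = T * c := by
  have hc₀ : 0 ≤ c := (hc 0).nonneg fun n => hf₀ _
  have hper : ∀ x, ∑' n : ℤ, ENNReal.ofReal (f (x + n * T)) = ENNReal.ofReal c := fun x => by
    rw [← ENNReal.ofReal_tsum_of_nonneg (fun n => hf₀ _) (hc x).summable, (hc x).tsum_eq]
  rw [integral_eq_lintegral_of_nonneg_ae (.of_forall hf₀) hf.aestronglyMeasurable,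
    lintegral_eq_setLIntegral_Ioc_tsum_add_int_mul hT hf.ennreal_ofReal]
  simp only [hper, setLIntegral_const, Real.volume_Ioc, sub_zero]
  rw [ENNReal.toReal_mul, ENNReal.toReal_ofReal hc₀, ENNReal.toReal_ofReal hT.le, mul_comm]

def thetaSum (b y : ℝ) : ℝ := ∑' k : ℤ, exp (k * y * b - k ^ 2 * b)

section thetaSum

variable {b : ℝ}

open Complex in
/-- The terms are those of `jacobiTheta₂ (-(y * b / (2 * π)) * I) ((b / π) * I)`, which are real. -/
theorem summable_thetaSum_term (hb : 0 < b) (y : ℝ) :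
    Summable fun k : ℤ => Real.exp (k * y * b - k ^ 2 * b) := by
  have hτ : 0 < ((b / π : ℝ) * I).im := by simpa using div_pos hb pi_pos
  have hθ := (summable_jacobiTheta₂_term_iff ((-(y * b / (2 * π)) : ℝ) * I) _).2 hτ
  refine hθ.norm.congr fun k => ?_
  rw [norm_jacobiTheta₂_term]
  congr 1
  simp only [mul_im, ofReal_re, ofReal_im, I_re, I_im]
  field_simp
  ring

theorem one_le_thetaSum (hb : 0 < b) (y : ℝ) : 1 ≤ thetaSum b y := by
  simpa [thetaSum] using (summable_thetaSum_term hb y).le_tsum 0 fun k _ => (exp_pos _).le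

theorem thetaSum_pos (hb : 0 < b) (y : ℝ) : 0 < thetaSum b y :=
  one_pos.trans_le (one_le_thetaSum hb y)

theorem thetaSum_neg (b y : ℝ) : thetaSum b (-y) = thetaSum b y := by
  rw [thetaSum, ← (Equiv.neg ℤ).tsum_eq]
  exact tsum_congr fun k => by simp

theorem thetaSum_add_int_mul_two (b y : ℝ) (n : ℤ) :
    thetaSum b (y + n * 2) = exp (n * y * b + n ^ 2 * b) * thetaSum b y := by
  rw [thetaSum, thetaSum, ← (Equiv.addRight n).tsum_eq, ← tsum_mul_left]
  refine tsum_congr fun k => ?_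
  rw [Equiv.coe_addRight, ← exp_add]
  push_cast
  ring_nf

theorem hasSum_inv_thetaSum_add_int_mul_two (hb : 0 < b) (y : ℝ) :
    HasSum (fun n : ℤ => (thetaSum b (y + n * 2))⁻¹) 1 := by
  have hterm : ∀ n : ℤ,
      (thetaSum b (y + n * 2))⁻¹ = exp (n * -y * b - n ^ 2 * b) * (thetaSum b y)⁻¹ := by
    intro n
    rw [thetaSum_add_int_mul_two, mul_inv, ← exp_neg]
    ring_nf
  simp only [hterm]
  rw [show (1 : ℝ) = thetaSum b (-y) * (thetaSum b y)⁻¹ by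
    rw [thetaSum_neg, mul_inv_cancel₀ (thetaSum_pos hb y).ne']]
  exact (summable_thetaSum_term hb (-y)).hasSum.mul_right _

theorem measurable_thetaSum (b : ℝ) : Measurable (thetaSum b) :=
  Measurable.tsum fun k => by fun_prop

end thetaSum

theorem stmt10 (η : ℝ) (hη : 0 < η) :
    ∫ y : ℝ, 1 / (∑' k : ℤ, Real.exp ((k:ℝ) * y * η ^ 2 - (k:ℝ) ^ 2 * η ^ 2)) = 2 := by
  have hb : 0 < η ^ 2 := by positivity
  have h := integral_eq_mul_of_hasSum_add_int_mul two_pos (measurable_thetaSum (η ^ 2)).inv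
    (fun y => (inv_pos.2 (thetaSum_pos hb y)).le) (hasSum_inv_thetaSum_add_int_mul_two hb)
  simpa [thetaSum] using h
end
end
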